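/- arXiv:2009.10491 — 5 statements merged into one kernel-verified Lean document; each statement's English description precedes it below -/
import Mathlib

section
/- Let q be a natural number and let J₀ denote the real matrix indexed by Fin q ⊕ Fin q given in block form by J₀ = Matrix.fromBlocks 0 (−1) 1 0 (the canonical complex structure on ℝ^{2q}). If J is a real matrix indexed by Fin q ⊕ Fin q satisfying Jᵀ * J = 1 and J * J = −1, then there exists a real matrix P indexed by Fin q ⊕ Fin q with Pᵀ * P = 1 such that J = P * J₀ * Pᵀ. (The orthogonal group O(2q) acts transitively by conjugation on the set Z(q) of orthogonal complex structures on ℝ^{2q}.) -/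
open Matrix

/-- The canonical complex structure `J₀` on `ℝ^{2q}`. -/
def J0 (q : ℕ) : Matrix (Fin q ⊕ Fin q) (Fin q ⊕ Fin q) ℝ :=
  Matrix.fromBlocks 0 (-1) 1 0

/-!
`J` turns `ℝ^{2q}` into a `q`-dimensional complex vector space, `i` acting as `J`, and since `J`
is orthogonal and skew, `⟪u, v⟫ = u ⬝ᵥ v - i (u ⬝ᵥ J v)` is a Hermitian inner product on it.
A unitary basis `v₁, …, v_q` gives the real orthonormal basis `v₁, …, v_q, J v₁, …, J v_q`,
in which `J` is `J₀`.
-/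

noncomputable section

namespace Matrix

structure OrthComplexStructure (ι : Type*) [Fintype ι] [DecidableEq ι] where
  J : Matrix ι ι ℝ
  transpose_mul_self : Jᵀ * J = 1
  mul_self : J * J = -1

namespace OrthComplexStructure

variable {ι : Type*} [Fintype ι] [DecidableEq ι] (c : OrthComplexStructure ι)

theorem transpose_eq_neg : c.Jᵀ = -c.J := by
  calc c.Jᵀ = c.Jᵀ * (c.J * -c.J) := by rw [mul_neg, c.mul_self, neg_neg, mul_one]
    _ = -c.J := by rw [← mul_assoc, c.transpose_mul_self, one_mul]

theorem mulVec_mulVec_self (x : ι → ℝ) : c.J *ᵥ c.J *ᵥ x = -x := by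
  rw [mulVec_mulVec, c.mul_self, neg_mulVec, one_mulVec]

theorem mulVec_dotProduct (x y : ι → ℝ) : c.J *ᵥ x ⬝ᵥ y = -(x ⬝ᵥ c.J *ᵥ y) := by
  rw [dotProduct_comm, dotProduct_mulVec, ← mulVec_transpose, c.transpose_eq_neg, neg_mulVec,
    neg_dotProduct, dotProduct_comm]

/-- `ℝ^ι` as a complex inner product space, `i` acting as `J`. -/
def Space (_ : OrthComplexStructure ι) : Type _ := ι → ℝ

instance : AddCommGroup c.Space := Pi.addCommGroup
instance : Module ℝ c.Space := Pi.module _ _ _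
instance : Module.Finite ℝ c.Space := inferInstanceAs (Module.Finite ℝ (ι → ℝ))

def ofSpace : c.Space ≃ₗ[ℝ] ι → ℝ := LinearEquiv.refl ℝ _

def complexAction : ℂ →ₐ[ℝ] Module.End ℝ (ι → ℝ) :=
  Complex.lift ⟨toLin' c.J, by
    change toLin' c.J ∘ₗ toLin' c.J = -1
    rw [← toLin'_mul, c.mul_self, map_neg, toLin'_one, Module.End.one_eq_id]⟩

instance : Module ℂ c.Space := Module.compHom (ι → ℝ) c.complexAction.toRingHom

theorem ofSpace_smul (z : ℂ) (v : c.Space) :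
    c.ofSpace (z • v) = z.re • c.ofSpace v + z.im • c.J *ᵥ c.ofSpace v := by
  change c.complexAction z (c.ofSpace v) = _
  simp [complexAction, Complex.liftAux_apply]

instance : IsScalarTower ℝ ℂ c.Space where
  smul_assoc r z v := by
    change c.complexAction (r • z) (c.ofSpace v) = r • c.complexAction z (c.ofSpace v)
    rw [map_smul, LinearMap.smul_apply]

instance : FiniteDimensional ℂ c.Space := Module.Finite.of_restrictScalars_finite ℝ ℂ c.Space

theorem two_mul_finrank_space : 2 * Module.finrank ℂ c.Space = Fintype.card ι := by
  rw [← Complex.finrank_real_complex, Module.finrank_mul_finrank]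
  exact Module.finrank_fintype_fun_eq_card ℝ

@[reducible]
def innerCore : InnerProductSpace.Core ℂ c.Space where
  inner u v := ⟨c.ofSpace u ⬝ᵥ c.ofSpace v, -(c.ofSpace u ⬝ᵥ c.J *ᵥ c.ofSpace v)⟩
  conj_inner_symm u v := by
    apply Complex.ext
    · exact dotProduct_comm _ _
    · simp only [Complex.conj_im, neg_neg]
      rw [dotProduct_comm, c.mulVec_dotProduct]
  re_inner_nonneg u := dotProduct_self_star_nonneg (c.ofSpace u)
  add_left u v w := by
    apply Complex.ext <;>
    simp only [map_add, add_dotProduct, Complex.add_re, Complex.add_im, neg_add]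
  smul_left u v z := by
    apply Complex.ext <;>
    simp only [c.ofSpace_smul, add_dotProduct, smul_dotProduct, c.mulVec_dotProduct,
      c.mulVec_mulVec_self, dotProduct_neg, smul_eq_mul, Complex.mul_re, Complex.mul_im,
      Complex.conj_re, Complex.conj_im] <;> ring
  definite u hu := c.ofSpace.injective <| by
    simpa using dotProduct_self_eq_zero.mp (congrArg Complex.re hu)

instance : NormedAddCommGroup c.Space := c.innerCore.toNormedAddCommGroup

instance : InnerProductSpace ℂ c.Space := InnerProductSpace.ofCore c.innerCore.toCore

theorem inner_re (u v : c.Space) : (inner ℂ u v).re = c.ofSpace u ⬝ᵥ c.ofSpace v := rfl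

theorem inner_im (u v : c.Space) : (inner ℂ u v).im = -(c.ofSpace u ⬝ᵥ c.J *ᵥ c.ofSpace v) := rfl

theorem exists_unitary_frame (κ : Type*) [Fintype κ] [DecidableEq κ]
    (hκ : Fintype.card ι = 2 * Fintype.card κ) :
    ∃ V : Matrix ι κ ℝ, Vᵀ * V = 1 ∧ Vᵀ * c.J * V = 0 := by
  have hrank : Module.finrank ℂ c.Space = Fintype.card κ := by
    have := c.two_mul_finrank_space; omega
  let b := (stdOrthonormalBasis ℂ c.Space).reindex (Fintype.equivFinOfCardEq hrank.symm).symm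
  have hb := orthonormal_iff_ite.mp b.orthonormal
  set V : Matrix ι κ ℝ := of fun k i => c.ofSpace (b i) k
  refine ⟨V, ?_, ?_⟩
  · ext i j
    have : (Vᵀ * V) i j = (inner ℂ (b i) (b j)).re := by
      simp [V, mul_apply, inner_re, dotProduct]
    rw [this, hb]
    simp [one_apply, apply_ite Complex.re]
  · ext i j
    have : (Vᵀ * c.J * V) i j = -(inner ℂ (b i) (b j)).im := by
      rw [Matrix.mul_assoc]
      simp [V, mul_apply, inner_im, dotProduct, mulVec]
    rw [this, hb]
    simp [apply_ite Complex.im]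

theorem transpose_fromCols_mul_fromCols {κ : Type*} [Fintype κ] [DecidableEq κ]
    {V : Matrix ι κ ℝ} (hV : Vᵀ * V = 1) (hVJ : Vᵀ * c.J * V = 0) :
    (fromCols V (c.J * V))ᵀ * fromCols V (c.J * V) = 1 := by
  have hJVV : (c.J * V)ᵀ * V = 0 := by
    rw [transpose_mul, c.transpose_eq_neg, Matrix.mul_neg, Matrix.neg_mul, hVJ, neg_zero]
  have hVJV : Vᵀ * (c.J * V) = 0 := by rw [← Matrix.mul_assoc, hVJ]
  have hJVJV : (c.J * V)ᵀ * (c.J * V) = 1 := by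
    rw [transpose_mul, Matrix.mul_assoc, ← Matrix.mul_assoc c.Jᵀ, c.transpose_mul_self,
      Matrix.one_mul, hV]
  rw [transpose_fromCols, fromRows_mul_fromCols, hV, hJVV, hVJV, hJVJV, fromBlocks_one]

theorem mul_fromCols_eq_fromCols_mul {κ : Type*} [Fintype κ] [DecidableEq κ] (V : Matrix ι κ ℝ) :
    c.J * fromCols V (c.J * V) =
      fromCols V (c.J * V) * (fromBlocks 0 (-1) 1 0 : Matrix (κ ⊕ κ) (κ ⊕ κ) ℝ) := by
  rw [mul_fromCols, fromCols_mul_fromBlocks, ← Matrix.mul_assoc, c.mul_self]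
  simp

end OrthComplexStructure
end Matrix

/-- The orthogonal group `O(2q)` acts transitively by conjugation on the set of
orthogonal complex structures on `ℝ^{2q}`. -/
theorem orthogonal_complex_structure_conjugate_to_J0 (q : ℕ)
    (J : Matrix (Fin q ⊕ Fin q) (Fin q ⊕ Fin q) ℝ)
    (h1 : Jᵀ * J = 1) (h2 : J * J = -1) :
    ∃ P : Matrix (Fin q ⊕ Fin q) (Fin q ⊕ Fin q) ℝ,
      Pᵀ * P = 1 ∧ J = P * J0 q * Pᵀ := by
  let c : OrthComplexStructure (Fin q ⊕ Fin q) := ⟨J, h1, h2⟩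
  obtain ⟨V, hV, hVJ⟩ := c.exists_unitary_frame (Fin q) (by simp [two_mul])
  set P := fromCols V (J * V)
  have hP : Pᵀ * P = 1 := c.transpose_fromCols_mul_fromCols hV hVJ
  refine ⟨P, hP, ?_⟩
  calc J = J * P * Pᵀ := by rw [mul_assoc, mul_eq_one_comm.mp hP, mul_one]
    _ = P * J0 q * Pᵀ := by rw [c.mul_fromCols_eq_fromCols_mul V]; rfl
end
end

section
/- Let q be a natural number and let J₀ denote the real matrix indexed by Fin q ⊕ Fin q given in block form by J₀ = Matrix.fromBlocks 0 (−1) 1 0 (the canonical complex structure on ℝ^{2q}). If A is a real matrix indexed by Fin q ⊕ Fin q with Aᵀ * A = 1 and A * J₀ = J₀ * A, then det A = 1. (The stabilizer of J₀ in the orthogonal group O(2q) is contained in SO(2q); it is the unitary group U(q), so the fiber of the twistor space is SO(2q)/U(q).) -/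
open Matrix

/-- A real block matrix of the form `[[a, b], [-b, a]]` has nonnegative determinant,
since over `ℂ` it is similar to `[[a - i b, 0], [-b, a + i b]]` and hence has
determinant `|det (a - i b)|²`. -/
theorem det_nonneg_aux (q : ℕ) (a b : Matrix (Fin q) (Fin q) ℝ) :
    0 ≤ (Matrix.fromBlocks a b (-b) a).det := by
  set a' := a.map Complex.ofReal with ha'
  set b' := b.map Complex.ofReal with hb'
  have key : (fromBlocks (1 : Matrix (Fin q) (Fin q) ℂ) (Complex.I • 1) 0 1) *
      (fromBlocks a' b' (-b') a') * (fromBlocks 1 (-(Complex.I) • 1) 0 1)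
      = fromBlocks (a' - Complex.I • b') 0 (-b') (a' + Complex.I • b') := by
    simp [Matrix.fromBlocks_multiply, Matrix.smul_mul, Matrix.mul_smul, smul_smul,
      Complex.I_mul_I]
    refine ⟨?_, ?_, ?_⟩ <;> abel
  have hofreal : (Complex.ofRealHom : ℝ →+* ℂ).mapMatrix (fromBlocks a b (-b) a)
      = fromBlocks a' b' (-b') a' := by
    ext i j
    cases i <;> cases j <;>
      simp [ha', hb', Matrix.fromBlocks, Matrix.map_apply]
  have hdetmap : ((fromBlocks a b (-b) a).det : ℂ)
      = (fromBlocks a' b' (-b') a').det := by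
    rw [← hofreal, ← RingHom.map_det]
    rfl
  have hconj : a' + Complex.I • b' = (starRingEnd ℂ).mapMatrix (a' - Complex.I • b') := by
    ext i j
    simp [ha', hb', Matrix.map_apply, Matrix.sub_apply, Matrix.smul_apply]
  have hd2 := congrArg Matrix.det key
  rw [Matrix.det_mul, Matrix.det_mul, Matrix.det_fromBlocks_zero₂₁,
    Matrix.det_fromBlocks_zero₂₁, Matrix.det_fromBlocks_zero₁₂, Matrix.det_one,
    hconj, ← RingHom.map_det] at hd2
  simp only [one_mul, mul_one] at hd2
  rw [Complex.mul_conj] at hd2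
  have h3 : ((fromBlocks a b (-b) a).det : ℂ)
      = (Complex.normSq (a' - Complex.I • b').det : ℂ) := by rw [hdetmap, hd2]
  rw [Complex.ofReal_inj] at h3
  rw [h3]
  exact Complex.normSq_nonneg _

/-- The stabilizer of `J₀` in the orthogonal group `O(2q)` is contained in `SO(2q)`:
an orthogonal matrix commuting with `J₀` has determinant `1`. -/
theorem det_eq_one_of_orthogonal_commuting_with_J0 (q : ℕ)
    (A : Matrix (Fin q ⊕ Fin q) (Fin q ⊕ Fin q) ℝ)
    (h1 : Aᵀ * A = 1) (h2 : A * J0 q = J0 q * A) :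
    A.det = 1 := by
  have hA := (Matrix.fromBlocks_toBlocks A).symm
  set a := A.toBlocks₁₁ with ha
  set b := A.toBlocks₁₂ with hb
  set c := A.toBlocks₂₁ with hc
  set d := A.toBlocks₂₂ with hd
  rw [hA, J0, Matrix.fromBlocks_multiply, Matrix.fromBlocks_multiply] at h2
  have e1 := congrArg Matrix.toBlocks₁₁ h2
  have e2 := congrArg Matrix.toBlocks₁₂ h2
  simp only [Matrix.toBlocks_fromBlocks₁₁, Matrix.toBlocks_fromBlocks₁₂,
    Matrix.mul_zero, Matrix.zero_mul, Matrix.mul_one, Matrix.one_mul,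
    Matrix.mul_neg, Matrix.neg_mul, zero_add, add_zero] at e1 e2
  have hAd : A.det = (Matrix.fromBlocks a b (-b) a).det := by
    have hc2 : c = -b := by rw [e1, neg_neg]
    have hd2 : d = a := (neg_injective e2).symm
    rw [hA, hc2, hd2]
  have hnn : 0 ≤ A.det := hAd ▸ det_nonneg_aux q a b
  have hsq : A.det * A.det = 1 := by
    have := congrArg Matrix.det h1
    rwa [Matrix.det_mul, Matrix.det_transpose, Matrix.det_one] at this
  nlinarith
end

section
/- Let q be a natural number and let J₀ denote the real matrix indexed by Fin q ⊕ Fin q given in block form by J₀ = Matrix.fromBlocks 0 (−1) 1 0 (the canonical complex structure on ℝ^{2q}). Let G be the group of orthogonal real matrices indexed by Fin q ⊕ Fin q (those A with Aᵀ * A = 1), and let H ≤ G be the subgroup of those A that commute with J₀. Then the map A ↦ A * J₀ * Aᵀ induces a well-defined bijection from the quotient G/H onto the set {J | Jᵀ * J = 1 ∧ J * J = −1} of orthogonal complex structures on ℝ^{2q}. (This is the canonical identification of the twistor fiber Z(q) with a homogeneous space of the orthogonal group, the orthogonal-group analogue of the diffeomorphism SO(2q)/U(q) ≅ Z(q) given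 by A·U(q) ↦ A J₀ A⁻¹.) -/
/-!
Conjugation by `O(2q)` preserves orthogonal complex structures, and the stabilizer of `J₀` is
its commutant, so by orbit–stabilizer it suffices that every orthogonal complex structure `J` is
conjugate to `J₀`. Call a subspace `L` isotropic if `⟪x, J y⟫ = 0` on `L`. Since `J` is
skew-adjoint, any nonzero vector orthogonal to `L + JL` can be added to an isotropic `L`, so
there is an isotropic `L` of dimension `q`; if `(e_k)` is an orthonormal basis of `L`, then
`(e_k, J e_k)` is an orthonormal basis of `ℝ^{2q}` in which `J` has matrix `J₀`.
-/

open Matrix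

lemma J0_mem_orthogonalGroup (q : ℕ) :
    J0 q ∈ Matrix.orthogonalGroup (Fin q ⊕ Fin q) ℝ := by
  constructor <;>
    simp [Matrix.star_eq_conjTranspose, Matrix.conjTranspose_eq_transpose_of_trivial, J0,
      Matrix.fromBlocks_transpose, Matrix.fromBlocks_multiply, ← Matrix.fromBlocks_one]

/-- `J₀` as an element of the orthogonal group. -/
def J0ₒ (q : ℕ) : Matrix.orthogonalGroup (Fin q ⊕ Fin q) ℝ :=
  ⟨J0 q, J0_mem_orthogonalGroup q⟩

/-- The subgroup of the orthogonal group `O(2q)` consisting of elements commuting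
with `J₀`. -/
def commutantJ0 (q : ℕ) : Subgroup (Matrix.orthogonalGroup (Fin q ⊕ Fin q) ℝ) :=
  Subgroup.centralizer {J0ₒ q}

open Module
open scoped RealInnerProductSpace

section OrthogonalComplexStructure

open Submodule

variable {V : Type*} [NormedAddCommGroup V] [InnerProductSpace ℝ V] {j : V →ₗᵢ[ℝ] V}

theorem inner_map_left_eq_neg (hj : ∀ x, j (j x) = -x) (x y : V) :
    ⟪j x, y⟫ = -⟪x, j y⟫ := by
  rw [← j.inner_map_map, hj, inner_neg_left]

theorem inner_self_map_eq_zero (hj : ∀ x, j (j x) = -x) (x : V) : ⟪x, j x⟫ = 0 := by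
  have h := inner_map_left_eq_neg hj x x
  rw [real_inner_comm] at h
  linarith

variable (j) in
def IsIsotropic (L : Submodule ℝ V) : Prop :=
  ∀ x ∈ L, ∀ y ∈ L, ⟪x, j y⟫ = 0

theorem exists_isIsotropic_finrank_succ [FiniteDimensional ℝ V] (hj : ∀ x, j (j x) = -x)
    {L : Submodule ℝ V} (hL : IsIsotropic j L) (hdim : 2 * finrank ℝ L < finrank ℝ V) :
    ∃ L' : Submodule ℝ V, IsIsotropic j L' ∧ finrank ℝ L' = finrank ℝ L + 1 := by
  set K := L ⊔ L.map j.toLinearMap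
  have hK : K ≠ ⊤ := by
    intro hK
    have hsup : finrank ℝ K ≤ _ := finrank_add_le_finrank_add_finrank L (L.map j.toLinearMap)
    have hmap := finrank_map_le j.toLinearMap L
    rw [hK, finrank_top] at hsup
    omega
  obtain ⟨x, hxK, hx0⟩ := (Submodule.ne_bot_iff _).1 (orthogonal_eq_bot_iff.not.2 hK)
  have hjL : ∀ l ∈ L, j l ∈ K := fun l hl => mem_sup_right (mem_map_of_mem hl)
  have hx_jl : ∀ l ∈ L, ⟪x, j l⟫ = 0 := fun l hl => inner_left_of_mem_orthogonal (hjL l hl) hxK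
  have hl_jx : ∀ l ∈ L, ⟪l, j x⟫ = 0 := fun l hl => by
    rw [← neg_eq_zero, ← inner_map_left_eq_neg hj]
    exact inner_right_of_mem_orthogonal (hjL l hl) hxK
  have hxL : x ∉ L := fun hxL =>
    hx0 (inner_self_eq_zero.1 (inner_left_of_mem_orthogonal (mem_sup_left hxL) hxK))
  refine ⟨L ⊔ span ℝ {x}, ?_, finrank_sup_span_singleton hxL⟩
  rintro _ hu _ hw
  obtain ⟨l, hl, _, hs, rfl⟩ := mem_sup.1 hu
  obtain ⟨a, rfl⟩ := mem_span_singleton.1 hs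
  obtain ⟨l', hl', _, hs', rfl⟩ := mem_sup.1 hw
  obtain ⟨b, rfl⟩ := mem_span_singleton.1 hs'
  simp [inner_add_left, inner_add_right, inner_smul_left, inner_smul_right, hL l hl l' hl',
    hx_jl l' hl', hl_jx l hl, inner_self_map_eq_zero hj]

theorem exists_isIsotropic_finrank_eq [FiniteDimensional ℝ V] (hj : ∀ x, j (j x) = -x) :
    ∀ n, 2 * n ≤ finrank ℝ V → ∃ L : Submodule ℝ V, IsIsotropic j L ∧ finrank ℝ L = n
  | 0, _ => ⟨⊥, by simp [IsIsotropic], finrank_bot ℝ V⟩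
  | n + 1, hn => by
    obtain ⟨L, hL, rfl⟩ := exists_isIsotropic_finrank_eq hj n (by omega)
    exact exists_isIsotropic_finrank_succ hj hL (by omega)

theorem IsIsotropic.orthonormal_sumElim {L : Submodule ℝ V} (hL : IsIsotropic j L)
    {ι : Type*} [Fintype ι] (b : OrthonormalBasis ι ℝ L) :
    Orthonormal ℝ (Sum.elim (fun i => (b i : V)) (fun i => j (b i))) := by
  classical
  have hb := b.orthonormal.comp_linearIsometry L.subtypeₗᵢ
  have hjb := hb.comp_linearIsometry j
  rw [orthonormal_iff_ite] at hb hjb ⊢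
  rintro (i | i) (k | k)
  · simpa using hb i k
  · simpa using hL _ (b i).2 _ (b k).2
  · simpa [real_inner_comm] using hL _ (b k).2 _ (b i).2
  · simpa using hjb i k

theorem exists_orthonormalBasis_map_inl_eq_inr [FiniteDimensional ℝ V]
    (hj : ∀ x, j (j x) = -x) {n : ℕ} (hn : finrank ℝ V = 2 * n) :
    ∃ b : OrthonormalBasis (Fin n ⊕ Fin n) ℝ V, ∀ k, j (b (.inl k)) = b (.inr k) := by
  obtain ⟨L, hL, hLn⟩ := exists_isIsotropic_finrank_eq hj n hn.ge
  have hv := hL.orthonormal_sumElim ((stdOrthonormalBasis ℝ L).reindex (finCongr hLn))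
  have hspan := hv.linearIndependent.span_eq_top_of_card_eq_finrank' (by simp [hn]; ring)
  exact ⟨OrthonormalBasis.mk hv hspan.ge, fun k => by simp⟩

end OrthogonalComplexStructure

theorem LinearMap.toMatrix_eq_fromBlocks_of_apply_inl {R M ι : Type*} [CommRing R]
    [AddCommGroup M] [Module R M] [Fintype ι] [DecidableEq ι] (b : Basis (ι ⊕ ι) R M)
    {f : M →ₗ[R] M} (hf : ∀ x, f (f x) = -x) (hb : ∀ k, f (b (.inl k)) = b (.inr k)) :
    LinearMap.toMatrix b b f = fromBlocks 0 (-1) 1 0 := by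
  have hb' : ∀ k, f (b (.inr k)) = -b (.inl k) := fun k => by rw [← hb, hf]
  ext (i | i) (k | k) <;>
    simp [LinearMap.toMatrix_apply, hb, hb', Finsupp.single_apply, one_apply, eq_comm]

theorem Matrix.inner_toEuclideanLin_toEuclideanLin {n : Type*} [Fintype n] [DecidableEq n]
    {J : Matrix n n ℝ} (hJ : Jᵀ * J = 1) (x y : EuclideanSpace ℝ n) :
    ⟪toEuclideanLin J x, toEuclideanLin J y⟫ = ⟪x, y⟫ := by
  simp only [EuclideanSpace.inner_eq_star_dotProduct, toLpLin_apply, star_trivial]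
  rw [← vecMul_transpose, ← dotProduct_mulVec, mulVec_mulVec, hJ, one_mulVec]

theorem OrthonormalBasis.toMatrix_flip_eq_transpose {ι E : Type*} [Fintype ι] [DecidableEq ι]
    [NormedAddCommGroup E] [InnerProductSpace ℝ E] (a b : OrthonormalBasis ι ℝ E) :
    b.toBasis.toMatrix a = (a.toBasis.toMatrix b)ᵀ := by
  ext i k
  simp [Basis.toMatrix_apply, OrthonormalBasis.repr_apply_apply, real_inner_comm]

theorem exists_mem_orthogonalGroup_mul_J0_mul_transpose_eq {q : ℕ}
    {J : Matrix (Fin q ⊕ Fin q) (Fin q ⊕ Fin q) ℝ} (h1 : Jᵀ * J = 1) (h2 : J * J = -1) :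
    ∃ A ∈ orthogonalGroup (Fin q ⊕ Fin q) ℝ, A * J0 q * Aᵀ = J := by
  let e := EuclideanSpace.basisFun (Fin q ⊕ Fin q) ℝ
  let j := (toEuclideanLin J).isometryOfInner (inner_toEuclideanLin_toEuclideanLin h1)
  have hj : ∀ x, j (j x) = -x := fun x => by
    simp [j, toLpLin_apply, mulVec_mulVec, h2, neg_mulVec]
  obtain ⟨b, hb⟩ := exists_orthonormalBasis_map_inl_eq_inr hj (n := q) (by simp; ring)
  refine ⟨e.toBasis.toMatrix b, e.toMatrix_orthonormalBasis_mem_orthogonal b, ?_⟩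
  have hJ0 : LinearMap.toMatrix b.toBasis b.toBasis j.toLinearMap = J0 q :=
    LinearMap.toMatrix_eq_fromBlocks_of_apply_inl _ hj (by simpa using hb)
  have hJ : LinearMap.toMatrix e.toBasis e.toBasis j.toLinearMap = J := by
    change LinearMap.toMatrix _ _ (toEuclideanLin J) = J
    rw [toEuclideanLin_eq_toLin_orthonormal, LinearMap.toMatrix_toLin]
  rw [← hJ0, ← e.toMatrix_flip_eq_transpose b, ← hJ,
    ← basis_toMatrix_mul_linearMap_toMatrix_mul_basis_toMatrix e.toBasis b.toBasis e.toBasis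
      b.toBasis]
  simp

theorem J0_mul_J0 (q : ℕ) : J0 q * J0 q = -1 := by
  simp [J0, fromBlocks_multiply, ← fromBlocks_one, fromBlocks_neg]

theorem val_mul_J0ₒ_mul_inv {q : ℕ} (c : orthogonalGroup (Fin q ⊕ Fin q) ℝ) :
    (c * J0ₒ q * c⁻¹).1 = c.1 * J0 q * c.1ᵀ := by
  simp [J0ₒ, star_eq_conjTranspose]

theorem isConj_J0ₒ_iff {q : ℕ} (A : orthogonalGroup (Fin q ⊕ Fin q) ℝ) :
    IsConj A (J0ₒ q) ↔ A.1 * A.1 = -1 := by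
  constructor
  · intro hA
    obtain ⟨c, rfl⟩ := isConj_iff.1 hA.symm
    have hc : c.1ᵀ * c.1 = 1 := (mem_orthogonalGroup_iff' _ _).1 c.2
    have hc' : c.1 * c.1ᵀ = 1 := (mem_orthogonalGroup_iff _ _).1 c.2
    calc _ = c.1 * (J0 q * (c.1ᵀ * c.1) * J0 q) * c.1ᵀ := by
          simp only [val_mul_J0ₒ_mul_inv, Matrix.mul_assoc]
      _ = -1 := by
          rw [hc, Matrix.mul_one, J0_mul_J0, Matrix.mul_neg, Matrix.mul_one, Matrix.neg_mul, hc']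
  · intro hA
    obtain ⟨P, hP, hPA⟩ :=
      exists_mem_orthogonalGroup_mul_J0_mul_transpose_eq ((mem_orthogonalGroup_iff' _ _).1 A.2) hA
    exact (isConj_iff.2 ⟨⟨P, hP⟩, Subtype.ext <| (val_mul_J0ₒ_mul_inv _).trans hPA⟩).symm

open MulAction

def orbitJ0ₒToComplexStructure (q : ℕ)
    (A : orbit (ConjAct (orthogonalGroup (Fin q ⊕ Fin q) ℝ)) (J0ₒ q)) :
    {J : Matrix (Fin q ⊕ Fin q) (Fin q ⊕ Fin q) ℝ // Jᵀ * J = 1 ∧ J * J = -1} :=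
  ⟨A.1, (mem_orthogonalGroup_iff' _ _).1 A.1.2,
    (isConj_J0ₒ_iff A.1).1 (ConjAct.mem_orbit_conjAct.1 A.2)⟩

theorem orbitJ0ₒToComplexStructure_bijective (q : ℕ) :
    Function.Bijective (orbitJ0ₒToComplexStructure q) := by
  refine ⟨fun _ _ h => Subtype.ext <| Subtype.ext <| congrArg (·.1) h, ?_⟩
  rintro ⟨J, h1, h2⟩
  let A : orthogonalGroup (Fin q ⊕ Fin q) ℝ := ⟨J, (mem_orthogonalGroup_iff' _ _).2 h1⟩
  exact ⟨⟨A, ConjAct.mem_orbit_conjAct.2 ((isConj_J0ₒ_iff A).2 h2)⟩, rfl⟩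

/-- The map `A ↦ A J₀ Aᵀ` induces a well-defined bijection from the quotient of the
orthogonal group `O(2q)` by the commutant of `J₀` onto the set of orthogonal complex
structures on `ℝ^{2q}`. -/
theorem twistor_fiber_homogeneous_space (q : ℕ) :
    ∃ e : (Matrix.orthogonalGroup (Fin q ⊕ Fin q) ℝ) ⧸ commutantJ0 q →
        {J : Matrix (Fin q ⊕ Fin q) (Fin q ⊕ Fin q) ℝ // Jᵀ * J = 1 ∧ J * J = -1},
      Function.Bijective e ∧
      ∀ A : Matrix.orthogonalGroup (Fin q ⊕ Fin q) ℝ,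
        (e (QuotientGroup.mk A) : Matrix (Fin q ⊕ Fin q) (Fin q ⊕ Fin q) ℝ) =
          (A : Matrix (Fin q ⊕ Fin q) (Fin q ⊕ Fin q) ℝ) * J0 q *
            (A : Matrix (Fin q ⊕ Fin q) (Fin q ⊕ Fin q) ℝ)ᵀ := by
  let O := orthogonalGroup (Fin q ⊕ Fin q) ℝ
  let toOrbit : O ⧸ commutantJ0 q ≃ orbit (ConjAct O) (J0ₒ q) :=
    ((orbitEquivQuotientStabilizer (ConjAct O) (J0ₒ q)).trans
      (Subgroup.quotientEquivOfEq (ConjAct.stabilizer_eq_centralizer (J0ₒ q)))).symm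
  refine ⟨orbitJ0ₒToComplexStructure q ∘ toOrbit,
    (orbitJ0ₒToComplexStructure_bijective q).comp toOrbit.bijective, fun A => ?_⟩
  change ((orbitEquivQuotientStabilizer (ConjAct O) (J0ₒ q)).symm
    (QuotientGroup.mk (ConjAct.toConjAct A)) : O).1 = _
  rw [orbitEquivQuotientStabilizer_symm_apply, ConjAct.smul_def]
  exact val_mul_J0ₒ_mul_inv A
end

section
/- Let V be a finite-dimensional real inner product space, let D be a subspace of V, and let J : V →ₗ[ℝ] V be a linear map such that J maps D into D, J vanishes on the orthogonal complement Dᗮ, J(J x) = −x for all x ∈ D, and ⟪J x, J y⟫ = ⟪x, y⟫ for all x, y ∈ D. Then J³ = −J, J is skew-adjoint on all of V (⟪J x, y⟫ = −⟪x, J y⟫ for all x, y ∈ V), and J ∘ J = −P_D, where P_D is the orthogonal projection of V onto D. (A compatible almost complex structure on a subbundle D extends uniquely, by zero on Dᗮ, to a metric f-structure with image D; this is the second part of Theorem 3.1.) -/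
open scoped RealInnerProductSpace

/-!
Split `x = P_D x + (x - P_D x)` with `x - P_D x ∈ Dᗮ`. Since `J` kills `Dᗮ`, it factors through
`P_D`, so `J x ∈ D` and `J (J x) = J (J (P_D x)) = -P_D x`; the cube identity follows because
`P_D` fixes `J x`. On `D`, skew-adjointness comes from the isometry property applied to `x` and
`J y`, using `y = -J (J y)`; on `V`, both sides only see the `D`-components of `x` and `y`.
-/

namespace Submodule

variable {V : Type*} [NormedAddCommGroup V] [InnerProductSpace ℝ V]
  {D : Submodule ℝ V} {J : V →ₗ[ℝ] V}

theorem inner_apply_left_eq_neg_of_mem (hmap : ∀ x ∈ D, J x ∈ D)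
    (hsq : ∀ x ∈ D, J (J x) = -x) (hiso : ∀ x ∈ D, ∀ y ∈ D, ⟪J x, J y⟫ = ⟪x, y⟫)
    {x y : V} (hx : x ∈ D) (hy : y ∈ D) : ⟪J x, y⟫ = -⟪x, J y⟫ :=
  calc ⟪J x, y⟫ = ⟪J x, -J (J y)⟫ := by rw [hsq y hy, neg_neg]
    _ = -⟪x, J y⟫ := by rw [inner_neg_right, hiso x hx _ (hmap y hy)]

variable [D.HasOrthogonalProjection]

theorem apply_starProjection_of_orthogonal_le_ker {W : Type*} [AddCommGroup W] [Module ℝ W]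
    {f : V →ₗ[ℝ] W} (hzero : ∀ x ∈ Dᗮ, f x = 0) (x : V) : f (D.starProjection x) = f x :=
  calc f (D.starProjection x) = f (D.starProjection x) + f (x - D.starProjection x) := by
        rw [hzero _ (D.sub_starProjection_mem_orthogonal x), add_zero]
    _ = f x := by rw [← map_add, add_sub_cancel]

theorem apply_mem_of_orthogonal_le_ker (hmap : ∀ x ∈ D, J x ∈ D)
    (hzero : ∀ x ∈ Dᗮ, J x = 0) (x : V) : J x ∈ D := by
  rw [← apply_starProjection_of_orthogonal_le_ker hzero]
  exact hmap _ (D.starProjection_apply_mem x)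

theorem apply_apply_eq_neg_starProjection (hzero : ∀ x ∈ Dᗮ, J x = 0)
    (hsq : ∀ x ∈ D, J (J x) = -x) (x : V) : J (J x) = -D.starProjection x := by
  rw [← apply_starProjection_of_orthogonal_le_ker hzero x, hsq _ (D.starProjection_apply_mem x)]

theorem apply_apply_apply_eq_neg (hmap : ∀ x ∈ D, J x ∈ D) (hzero : ∀ x ∈ Dᗮ, J x = 0)
    (hsq : ∀ x ∈ D, J (J x) = -x) (x : V) : J (J (J x)) = -J x := by
  rw [apply_apply_eq_neg_starProjection hzero hsq,
    starProjection_eq_self_iff.mpr (apply_mem_of_orthogonal_le_ker hmap hzero x)]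

theorem inner_starProjection_right_of_mem {u : V} (hu : u ∈ D) (y : V) :
    ⟪u, D.starProjection y⟫ = ⟪u, y⟫ := by
  rw [← inner_starProjection_left_eq_right, starProjection_eq_self_iff.mpr hu]

theorem inner_apply_left_eq_neg (hmap : ∀ x ∈ D, J x ∈ D) (hzero : ∀ x ∈ Dᗮ, J x = 0)
    (hsq : ∀ x ∈ D, J (J x) = -x) (hiso : ∀ x ∈ D, ∀ y ∈ D, ⟪J x, J y⟫ = ⟪x, y⟫) (x y : V) :
    ⟪J x, y⟫ = -⟪x, J y⟫ := by
  have hJ := apply_mem_of_orthogonal_le_ker hmap hzero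
  have hP := D.starProjection_apply_mem
  calc ⟪J x, y⟫ = ⟪J (D.starProjection x), D.starProjection y⟫ := by
        rw [apply_starProjection_of_orthogonal_le_ker hzero,
          inner_starProjection_right_of_mem (hJ x)]
    _ = -⟪D.starProjection x, J (D.starProjection y)⟫ :=
        inner_apply_left_eq_neg_of_mem hmap hsq hiso (hP x) (hP y)
    _ = -⟪x, J y⟫ := by
        rw [apply_starProjection_of_orthogonal_le_ker hzero, real_inner_comm,
          inner_starProjection_right_of_mem (hJ y), real_inner_comm]

end Submodule

/-- A compatible almost complex structure on a subspace `D`, extended by zero on `Dᗮ`,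
is a metric f-structure: it satisfies `J³ = -J`, is skew-adjoint, and `J ∘ J` is minus
the orthogonal projection onto `D`. -/
theorem metric_f_structure_of_extended_complex_structure
    {V : Type*} [NormedAddCommGroup V] [InnerProductSpace ℝ V] [FiniteDimensional ℝ V]
    (D : Submodule ℝ V) (J : V →ₗ[ℝ] V)
    (hmap : ∀ x ∈ D, J x ∈ D)
    (hzero : ∀ x ∈ Dᗮ, J x = 0)
    (hsq : ∀ x ∈ D, J (J x) = -x)
    (hiso : ∀ x ∈ D, ∀ y ∈ D, ⟪J x, J y⟫ = ⟪x, y⟫) :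
    (∀ x : V, J (J (J x)) = -(J x)) ∧
    (∀ x y : V, ⟪J x, y⟫ = -⟪x, J y⟫) ∧
    (∀ x : V, J (J x) = -((D.orthogonalProjection x : V))) :=
  ⟨Submodule.apply_apply_apply_eq_neg hmap hzero hsq,
    Submodule.inner_apply_left_eq_neg hmap hzero hsq hiso,
    Submodule.apply_apply_eq_neg_starProjection hzero hsq⟩
end

section
/- Let V be a finite-dimensional real inner product space of dimension 2q with q ≥ 1, and let T : V →ₗ[ℝ] V be an invertible linear map. Then the following are equivalent: (i) for every linear map J : V →ₗ[ℝ] V with J ∘ J = −id and ⟪J x, J y⟫ = ⟪x, y⟫ for all x, y, the conjugate T ∘ J ∘ T⁻¹ also satisfies ⟪(T∘J∘T⁻¹) x, (T∘J∘T⁻¹) y⟫ = ⟪x, y⟫ for all x, y; (ii) T is conformal, i.e. there exists c > 0 such that ⟪T x, T y⟫ = c·⟪x, y⟫ for all x, y ∈ V. (This is the linear-algebraic core of Corollary 3.5: the induced fiber morphism on twistor spaces is holomorphic if and only if the map is conformal.) -/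
/-!
If `T J T⁻¹` is orthogonal for every compatible complex structure `J`, choose for an orthonormal
pair `(e, f)` a compatible `J` with `J e = f`; then `J f = -e`, and orthogonality of `T J T⁻¹`
at `(T e, T f)` reads `-⟪T f, T e⟫ = ⟪T e, T f⟫`, so `T` preserves orthogonality. Such a `J`
exists because the orthogonal group acts transitively on orthonormal pairs and `(e', J₀ e')` is
one for any compatible `J₀` (e.g. multiplication by `i` on `ℂ^q`). A linear map preserving
orthogonality is conformal: `x + y ⊥ x - y` exactly when `‖x‖ = ‖y‖`, so it scales all norms by
the same factor. Conversely a conformal `T` scales inner products by `c` and `T⁻¹` by `c⁻¹`.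
-/

open scoped RealInnerProductSpace

open Module

theorem Orthonormal.exists_linearIsometryEquiv_apply_eq {𝕜 V ι : Type*} [RCLike 𝕜]
    [NormedAddCommGroup V] [InnerProductSpace 𝕜 V] [FiniteDimensional 𝕜 V] [Fintype ι]
    {v w : ι → V} (hv : Orthonormal 𝕜 v) (hw : Orthonormal 𝕜 w) :
    ∃ U : V ≃ₗᵢ[𝕜] V, ∀ i, U (v i) = w i := by
  classical
  let bv := OrthonormalBasis.span hv Finset.univ
  let bw := OrthonormalBasis.span hw Finset.univ
  let L := (Submodule.subtypeₗᵢ _).comp (bv.equiv bw (Equiv.refl _)).toLinearIsometry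
  refine ⟨L.extend.toLinearIsometryEquiv rfl, fun i => ?_⟩
  simpa [L, bv, bw] using L.extend_apply (bv ⟨i, Finset.mem_univ i⟩)

section Real

variable {V W : Type*} [NormedAddCommGroup V] [InnerProductSpace ℝ V]
  [NormedAddCommGroup W] [InnerProductSpace ℝ W]

theorem orthonormal_pair_iff {x y : V} :
    Orthonormal ℝ ![x, y] ↔ ‖x‖ = 1 ∧ ‖y‖ = 1 ∧ ⟪x, y⟫ = 0 := by
  simp [Orthonormal, Fin.forall_fin_two, Pairwise, real_inner_comm x y, and_assoc]

theorem inner_map_map_eq_zero_of_orthonormal (A : V →ₗ[ℝ] W)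
    (hA : ∀ e f, Orthonormal ℝ ![e, f] → ⟪A e, A f⟫ = 0) {x y : V} (hxy : ⟪x, y⟫ = 0) :
    ⟪A x, A y⟫ = 0 := by
  rcases eq_or_ne x 0 with rfl | hx
  · simp
  rcases eq_or_ne y 0 with rfl | hy
  · simp
  have hunit := hA (‖x‖⁻¹ • x) (‖y‖⁻¹ • y) <| orthonormal_pair_iff.2
    ⟨norm_smul_inv_norm hx, norm_smul_inv_norm hy, by simp [real_inner_smul_left,
      real_inner_smul_right, hxy]⟩
  simpa [real_inner_smul_left, real_inner_smul_right, hx, hy] using hunit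

theorem exists_pos_inner_map_map_eq_mul_of_inner_eq_zero [Nontrivial V] (A : V →ₗ[ℝ] W)
    (hinj : Function.Injective A) (hA : ∀ x y, ⟪x, y⟫ = 0 → ⟪A x, A y⟫ = 0) :
    ∃ c : ℝ, 0 < c ∧ ∀ x y, ⟪A x, A y⟫ = c * ⟪x, y⟫ := by
  have norm_eq : ∀ x y : V, ‖x‖ = ‖y‖ → ‖A x‖ = ‖A y‖ := fun x y h => by
    rw [← real_inner_add_sub_eq_zero_iff, ← map_add, ← map_sub]
    exact hA _ _ ((real_inner_add_sub_eq_zero_iff x y).2 h)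
  obtain ⟨u, hu⟩ := exists_norm_eq V zero_le_one
  have norm_apply : ∀ x, ‖A x‖ = ‖A u‖ * ‖x‖ := fun x => by
    rw [norm_eq x (‖x‖ • u) (by simp [norm_smul, hu]), map_smul, norm_smul, norm_norm, mul_comm]
  have hAu : A u ≠ 0 := (map_ne_zero_iff A hinj).2 (norm_ne_zero_iff.1 (by simp [hu]))
  refine ⟨‖A u‖ ^ 2, by positivity, fun x y => ?_⟩
  rw [real_inner_eq_norm_add_mul_self_sub_norm_mul_self_sub_norm_mul_self_div_two,
    real_inner_eq_norm_add_mul_self_sub_norm_mul_self_sub_norm_mul_self_div_two x, ← map_add,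
    norm_apply (x + y), norm_apply x, norm_apply y]
  ring

structure IsCompatibleComplexStructure (J : V →ₗ[ℝ] V) : Prop where
  apply_apply : ∀ x, J (J x) = -x
  inner_map_map : ∀ x y, ⟪J x, J y⟫ = ⟪x, y⟫

namespace IsCompatibleComplexStructure

variable {J : V →ₗ[ℝ] V} (hJ : IsCompatibleComplexStructure J)
include hJ

theorem norm_map (x : V) : ‖J x‖ = ‖x‖ :=
  (LinearMap.norm_map_iff_inner_map_map J).2 hJ.inner_map_map x

theorem inner_self_apply (x : V) : ⟪x, J x⟫ = 0 := by
  have h := hJ.inner_map_map x (J x)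
  rw [hJ.apply_apply, inner_neg_right, real_inner_comm] at h
  linarith

theorem conj (U : V ≃ₗᵢ[ℝ] W) : IsCompatibleComplexStructure (U.toLinearEquiv.conj J) where
  apply_apply x := by simp [hJ.apply_apply]
  inner_map_map x y := by simp [hJ.inner_map_map]

end IsCompatibleComplexStructure

theorem isCompatibleComplexStructure_I_smul {E : Type*} [NormedAddCommGroup E]
    [InnerProductSpace ℂ E] [InnerProductSpace ℝ E] [IsScalarTower ℝ ℂ E] :
    IsCompatibleComplexStructure (DistribSMul.toLinearMap ℝ E Complex.I) where
  apply_apply x := by simp [smul_smul]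
  inner_map_map := (LinearMap.norm_map_iff_inner_map_map _).1 fun x => by simp [norm_smul]

variable [FiniteDimensional ℝ V]

theorem exists_isCompatibleComplexStructure (hV : Even (finrank ℝ V)) :
    ∃ J : V →ₗ[ℝ] V, IsCompatibleComplexStructure J := by
  obtain ⟨n, hn⟩ := hV
  have hE : finrank ℝ (EuclideanSpace ℂ (Fin n)) = finrank ℝ V := by
    rw [← Module.finrank_mul_finrank ℝ ℂ, Complex.finrank_real_complex,
      finrank_euclideanSpace_fin, hn, two_mul]
  let U := (stdOrthonormalBasis ℝ _).equiv (stdOrthonormalBasis ℝ V) (finCongr hE)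
  exact ⟨_, isCompatibleComplexStructure_I_smul.conj U⟩

theorem exists_isCompatibleComplexStructure_apply_eq (hV : Even (finrank ℝ V)) {e f : V}
    (hef : Orthonormal ℝ ![e, f]) : ∃ J : V →ₗ[ℝ] V, IsCompatibleComplexStructure J ∧ J e = f := by
  obtain ⟨J₀, hJ₀⟩ := exists_isCompatibleComplexStructure hV
  have he : ‖e‖ = 1 := (orthonormal_pair_iff.1 hef).1
  have hJ₀e : Orthonormal ℝ ![e, J₀ e] :=
    orthonormal_pair_iff.2 ⟨he, (hJ₀.norm_map e).trans he, hJ₀.inner_self_apply e⟩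
  obtain ⟨U, hU⟩ := hJ₀e.exists_linearIsometryEquiv_apply_eq hef
  have hUe : U e = e := hU 0
  refine ⟨_, hJ₀.conj U, ?_⟩
  simpa [U.symm_apply_eq.2 hUe.symm] using hU 1

theorem inner_map_map_eq_zero_of_forall_isometric_conj (hV : Even (finrank ℝ V)) (T : V ≃ₗ[ℝ] V)
    (hT : ∀ J : V →ₗ[ℝ] V, IsCompatibleComplexStructure J →
      ∀ x y, ⟪T.conj J x, T.conj J y⟫ = ⟪x, y⟫)
    {e f : V} (hef : Orthonormal ℝ ![e, f]) : ⟪T e, T f⟫ = 0 := by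
  obtain ⟨J, hJ, hJe⟩ := exists_isCompatibleComplexStructure_apply_eq hV hef
  have hJf : J f = -e := by rw [← hJe, hJ.apply_apply]
  have h := hT J hJ (T e) (T f)
  simp only [LinearEquiv.conj_apply_apply, LinearEquiv.symm_apply_apply, hJe, hJf, map_neg,
    inner_neg_right, real_inner_comm (T e)] at h
  linarith

end Real

/-- Linear-algebraic core of Corollary 3.5: an invertible linear map `T` of a
`2q`-dimensional real inner product space (`q ≥ 1`) conjugates every compatible
complex structure to a compatible complex structure if and only if `T` is conformal. -/
theorem conjugation_preserves_compatible_structures_iff_conformal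
    {V : Type*} [NormedAddCommGroup V] [InnerProductSpace ℝ V] [FiniteDimensional ℝ V]
    (q : ℕ) (hq : 1 ≤ q) (hdim : Module.finrank ℝ V = 2 * q)
    (T : V ≃ₗ[ℝ] V) :
    ((∀ J : V →ₗ[ℝ] V, (∀ x, J (J x) = -x) → (∀ x y : V, ⟪J x, J y⟫ = ⟪x, y⟫) →
        ∀ x y : V, ⟪T (J (T.symm x)), T (J (T.symm y))⟫ = ⟪x, y⟫) ↔
      (∃ c : ℝ, 0 < c ∧ ∀ x y : V, ⟪T x, T y⟫ = c * ⟪x, y⟫)) := by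
  have hV : Even (finrank ℝ V) := ⟨q, by omega⟩
  have : Nontrivial V := Module.nontrivial_of_finrank_pos (R := ℝ) (by omega)
  constructor
  · intro h
    refine exists_pos_inner_map_map_eq_mul_of_inner_eq_zero (T : V →ₗ[ℝ] V) T.injective
      fun x y => inner_map_map_eq_zero_of_orthonormal _ fun e f hef => ?_
    exact inner_map_map_eq_zero_of_forall_isometric_conj hV T
      (fun J hJ => h J hJ.apply_apply hJ.inner_map_map) hef
  · rintro ⟨c, hc, hT⟩ J - hJ x y
    have hTsymm : ∀ u v : V, ⟪T.symm u, T.symm v⟫ = c⁻¹ * ⟪u, v⟫ := fun u v => by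
      rw [eq_inv_mul_iff_mul_eq₀ hc.ne', ← hT, T.apply_symm_apply, T.apply_symm_apply]
    rw [hT, hJ, hTsymm, mul_inv_cancel_left₀ hc.ne']
end
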